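/- For every real number x ≥ 8, the product of all primes p ≤ x satisfies ∏_{p ≤ x} p < 4^x/√(54·x^3). -/

import Mathlib

/-! The bound is proved in the squared integer form `(n#)² · 54 (n + 1)³ ≤ 16ⁿ` by strong
induction on `n ≥ 8`. Passing from an odd `n` to `n + 1` adds no prime, and the
cubic factor grows by less than the available factor `16`. For `n = 2m + 1` the primes in
`(m + 1, 2m + 1]` divide `C(2m + 1, m)`, so `(2m + 1)# ≤ (m + 1)# · C(2m + 1, m)`; the sharpened
central binomial estimate `C(2k, k)² (3k + 1) ≤ 16ᵏ` then supplies `C(2m + 1, m)²` with a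
linear saving that pays for doubling `n` inside the cubic factor. The real statement follows
from the case `n = ⌊x⌋` because `x < ⌊x⌋ + 1`. -/

open Nat

theorem centralBinom_sq_mul_le (k : ℕ) : centralBinom k ^ 2 * (3 * k + 1) ≤ 16 ^ k := by
  induction k with
  | zero => decide
  | succ k ih =>
    have key : (k + 1) ^ 2 * (3 * k + 1) * (centralBinom (k + 1) ^ 2 * (3 * (k + 1) + 1))
        ≤ (k + 1) ^ 2 * (3 * k + 1) * 16 ^ (k + 1) :=
      calc (k + 1) ^ 2 * (3 * k + 1) * (centralBinom (k + 1) ^ 2 * (3 * (k + 1) + 1))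
          = (3 * k + 4) * (3 * k + 1) * ((k + 1) * centralBinom (k + 1)) ^ 2 := by ring
        _ = 4 * (2 * k + 1) ^ 2 * (3 * k + 4) * (centralBinom k ^ 2 * (3 * k + 1)) := by
            rw [succ_mul_centralBinom_succ]; ring
        _ ≤ 4 * (2 * k + 1) ^ 2 * (3 * k + 4) * 16 ^ k := Nat.mul_le_mul_left _ ih
        _ ≤ 16 * ((k + 1) ^ 2 * (3 * k + 1)) * 16 ^ k := Nat.mul_le_mul_right _ (by nlinarith)
        _ = (k + 1) ^ 2 * (3 * k + 1) * 16 ^ (k + 1) := by ring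
    exact Nat.le_of_mul_le_mul_left key (by positivity)

theorem centralBinom_succ_eq_two_mul_choose (m : ℕ) :
    centralBinom (m + 1) = 2 * (2 * m + 1).choose m := by
  rw [centralBinom, mul_add_one, choose_succ_succ, choose_symm_half, ← two_mul]

theorem four_mul_choose_middle_sq_mul_le (m : ℕ) :
    4 * (2 * m + 1).choose m ^ 2 * (3 * m + 4) ≤ 16 ^ (m + 1) :=
  calc 4 * (2 * m + 1).choose m ^ 2 * (3 * m + 4)
      = centralBinom (m + 1) ^ 2 * (3 * (m + 1) + 1) := by
        rw [centralBinom_succ_eq_two_mul_choose]; ring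
    _ ≤ 16 ^ (m + 1) := centralBinom_sq_mul_le (m + 1)

theorem primorial_two_mul_add_one_le (m : ℕ) :
    primorial (2 * m + 1) ≤ primorial (m + 1) * (2 * m + 1).choose m :=
  calc primorial (2 * m + 1) = primorial (m + 1 + m) := by rw [two_mul, add_right_comm]
    _ ≤ primorial (m + 1) * (m + 1 + m).choose (m + 1) := primorial_add_le m.le_succ
    _ = primorial (m + 1) * (2 * m + 1).choose m := by
        rw [choose_symm_add, two_mul, add_right_comm]

theorem primorial_sq_mul_le_succ_of_odd {k : ℕ} (hk1 : k ≠ 1) (hk : Odd k)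
    (h : primorial k ^ 2 * (54 * (k + 1) ^ 3) ≤ 16 ^ k) :
    primorial (k + 1) ^ 2 * (54 * (k + 1 + 1) ^ 3) ≤ 16 ^ (k + 1) := by
  have hcubic : (k + 2) ^ 3 ≤ 16 * (k + 1) ^ 3 :=
    calc (k + 2) ^ 3 ≤ (2 * (k + 1)) ^ 3 := Nat.pow_le_pow_left (by omega) 3
      _ ≤ 16 * (k + 1) ^ 3 := by rw [mul_pow]; exact Nat.mul_le_mul_right _ (by norm_num)
  have key : primorial k ^ 2 * (54 * (k + 1 + 1) ^ 3) * (k + 1) ^ 3 ≤ 16 ^ (k + 1) * (k + 1) ^ 3 :=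
    calc primorial k ^ 2 * (54 * (k + 1 + 1) ^ 3) * (k + 1) ^ 3
        = primorial k ^ 2 * (54 * (k + 1) ^ 3) * (k + 2) ^ 3 := by ring
      _ ≤ 16 ^ k * (k + 2) ^ 3 := Nat.mul_le_mul_right _ h
      _ ≤ 16 ^ k * (16 * (k + 1) ^ 3) := Nat.mul_le_mul_left _ hcubic
      _ = 16 ^ (k + 1) * (k + 1) ^ 3 := by ring
  rw [primorial_succ hk1 hk]
  exact Nat.le_of_mul_le_mul_right key (by positivity)

theorem primorial_sq_mul_le_two_mul_add_one {m : ℕ} (hm : 6 ≤ m)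
    (h : primorial (m + 1) ^ 2 * (54 * (m + 1 + 1) ^ 3) ≤ 16 ^ (m + 1)) :
    primorial (2 * m + 1) ^ 2 * (54 * (2 * m + 1 + 1) ^ 3) ≤ 16 ^ (2 * m + 1) := by
  have hcubic : 1728 * (m + 1) ^ 3 ≤ 54 * (m + 2) ^ 3 * (3 * m + 4) := by
    obtain ⟨t, rfl⟩ : ∃ t, m = t + 6 := ⟨m - 6, by omega⟩
    nlinarith [sq_nonneg t]
  have key : primorial (2 * m + 1) ^ 2 * (54 * (2 * m + 1 + 1) ^ 3)
        * (54 * (m + 2) ^ 3 * (3 * m + 4))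
      ≤ 16 ^ (2 * m + 1) * (54 * (m + 2) ^ 3 * (3 * m + 4)) :=
    calc primorial (2 * m + 1) ^ 2 * (54 * (2 * m + 1 + 1) ^ 3)
          * (54 * (m + 2) ^ 3 * (3 * m + 4))
        ≤ (primorial (m + 1) * (2 * m + 1).choose m) ^ 2 * (54 * (2 * m + 1 + 1) ^ 3)
          * (54 * (m + 2) ^ 3 * (3 * m + 4)) := by
          gcongr; exact primorial_two_mul_add_one_le m
      _ = (primorial (m + 1) ^ 2 * (54 * (m + 1 + 1) ^ 3))
          * ((4 * (2 * m + 1).choose m ^ 2 * (3 * m + 4)) * (108 * (m + 1) ^ 3)) := by ring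
      _ ≤ 16 ^ (m + 1) * (16 ^ (m + 1) * (108 * (m + 1) ^ 3)) :=
          Nat.mul_le_mul h (Nat.mul_le_mul_right _ (four_mul_choose_middle_sq_mul_le m))
      _ = 16 ^ (2 * m + 1) * (1728 * (m + 1) ^ 3) := by ring
      _ ≤ 16 ^ (2 * m + 1) * (54 * (m + 2) ^ 3 * (3 * m + 4)) := Nat.mul_le_mul_left _ hcubic
  exact Nat.le_of_mul_le_mul_right key (by positivity)

theorem primorial_sq_mul_le {n : ℕ} (hn : 8 ≤ n) :
    primorial n ^ 2 * (54 * (n + 1) ^ 3) ≤ 16 ^ n := by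
  induction n using Nat.strong_induction_on with
  | _ n ih =>
  obtain hn15 | hn15 := lt_or_ge n 15
  · interval_cases n <;> decide
  obtain ⟨k, rfl⟩ : ∃ k, n = k + 1 := ⟨n - 1, by omega⟩
  rcases Nat.even_or_odd k with ⟨m, rfl⟩ | hk
  · rw [← two_mul]
    exact primorial_sq_mul_le_two_mul_add_one (by omega) (ih (m + 1) (by omega) (by omega))
  · exact primorial_sq_mul_le_succ_of_odd (by omega) hk (ih k (by omega) (by omega))

theorem stmt_13 (x : ℝ) (hx : 8 ≤ x) :
    ((∏ p ∈ (Finset.range (⌊x⌋₊ + 1)).filter Nat.Prime, p : ℕ) : ℝ) <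
      (4 : ℝ) ^ x / Real.sqrt (54 * x ^ 3) := by
  change (primorial ⌊x⌋₊ : ℝ) < _
  set n := ⌊x⌋₊
  have hx0 : 0 < x := by linarith
  have hP : (0 : ℝ) < primorial n := by exact_mod_cast primorial_pos n
  have hxn : x < n + 1 := Nat.lt_floor_add_one x
  have hnx : (n : ℝ) ≤ x := Nat.floor_le hx0.le
  have hbound : (primorial n : ℝ) ^ 2 * (54 * (n + 1) ^ 3) ≤ 16 ^ n := by
    exact_mod_cast primorial_sq_mul_le (Nat.le_floor (by exact_mod_cast hx))
  rw [lt_div_iff₀ (by positivity), ← Real.sqrt_sq hP.le,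
    ← Real.sqrt_mul (by positivity), Real.sqrt_lt' (by positivity)]
  calc (primorial n : ℝ) ^ 2 * (54 * x ^ 3)
      < (primorial n : ℝ) ^ 2 * (54 * (n + 1) ^ 3) := by gcongr
    _ ≤ 16 ^ n := hbound
    _ = (16 : ℝ) ^ (n : ℝ) := (Real.rpow_natCast 16 n).symm
    _ ≤ 16 ^ x := Real.rpow_le_rpow_of_exponent_le (by norm_num) hnx
    _ = (4 ^ x) ^ 2 := by
        rw [← Real.rpow_natCast, ← Real.rpow_mul (by norm_num), mul_comm,
          Real.rpow_mul (by norm_num)]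
        norm_num
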